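/- Let (A, [-,-]) be a Lie affgebra and N a Nijenhuis operator on it (an affine endomorphism with [Na, Nb] = N([a,b]_N), where [a,b]_N = ⟨[Na,b], N[a,b], [a,Nb]⟩). Then the Nijenhuis bracket [-,-]_N is itself a Lie bracket on A: it is bi-affine and satisfies heap-antisymmetry ⟨[a,b]_N,[a,a]_N,[b,a]_N⟩ = [b,b]_N and the heap Jacobi identity ⟨[a,[b,c]_N]_N,[a,a]_N,[b,[c,a]_N]_N,[b,b]_N,[c,[a,b]_N]_N⟩ = [c,c]_N. -/
import Mathlib


universe u v

class AbHeap (H : Type v) where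
  hp : H → H → H → H
  hassoc : ∀ a b c d e : H, hp (hp a b c) d e = hp a b (hp c d e)
  hidr : ∀ a b : H, hp a b b = a
  hidl : ∀ a b : H, hp b b a = a
  hcomm : ∀ a b c : H, hp a b c = hp c b a

open AbHeap

class AffMod (K : Type u) [CommRing K] (A : Type v) extends AbHeap A where
  act : K → A → A → A
  act_hp : ∀ (α : K) (a b c d : A),
    act α a (hp b c d) = hp (act α a b) (act α a c) (act α a d)
  act_scalar_hp : ∀ (α β γ : K) (a b : A),
    act (α - β + γ) a b = hp (act α a b) (act β a b) (act γ a b)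
  act_mul : ∀ (α β : K) (a b : A), act (α * β) a b = act α a (act β a b)
  act_base : ∀ (α : K) (a b c : A), act α a b = hp (act α c b) (act α c a) a
  act_zero : ∀ a b : A, act (0 : K) a b = a
  act_one : ∀ a b : A, act (1 : K) a b = b

open AffMod

/-- A homomorphism of affine `K`-modules: a heap homomorphism preserving the action. -/
def IsAffHom (K : Type u) [CommRing K] {A : Type v} {B : Type v} [AffMod K A] [AffMod K B]
    (f : A → B) : Prop :=
  (∀ a b c : A, f (hp a b c) = hp (f a) (f b) (f c)) ∧
  (∀ (α : K) (a b : A), f (act α a b) = act α (f a) (f b))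

/-- A (left) Lie bracket on an affine `K`-module: bi-affine, heap-antisymmetric,
satisfying the heap Jacobi identity. -/
def IsLieBracket (K : Type u) [CommRing K] {A : Type v} [AffMod K A] (br : A → A → A) : Prop :=
  (∀ b : A, IsAffHom K (fun a => br a b)) ∧
  (∀ a : A, IsAffHom K (br a)) ∧
  (∀ a b : A, hp (br a b) (br a a) (br b a) = br b b) ∧
  (∀ a b c : A,
    hp (hp (br a (br b c)) (br a a) (br b (br c a))) (br b b) (br c (br a b)) = br c c)

/-- The Nijenhuis bracket `[a,b]_N = ⟨[Na,b], N[a,b], [a,Nb]⟩`. -/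
def nijBr {A : Type v} [AbHeap A] (br : A → A → A) (N : A → A) : A → A → A :=
  fun a b => hp (br (N a) b) (N (br a b)) (br a (N b))

def heapGroup {A : Type v} [AbHeap A] (o : A) : AddCommGroup A :=
  letI : Add A := ⟨fun a b => hp a o b⟩
  letI : Zero A := ⟨o⟩
  letI : Neg A := ⟨fun a => hp o a o⟩
  { add := (· + ·), zero := 0, neg := Neg.neg,
    nsmul := nsmulRec, zsmul := zsmulRec,
    add_assoc := fun a b c => hassoc a o b o c,
    zero_add := fun a => hidl a o,
    add_zero := fun a => hidr a o,
    add_comm := fun a b => hcomm a o b,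
    neg_add_cancel := fun a => by
      show hp (hp o a o) o a = o
      rw [hassoc, hidl, hidr] }

theorem heap_hp_eq {A : Type v} [AbHeap A] (o : A) (a b c : A) :
    letI := heapGroup o
    hp a b c = a - b + c := by
  letI := heapGroup o
  show hp a b c = hp (hp a o (hp o b o)) o c
  have e1 : hp a o (hp o b o) = hp a b o := by rw [← hassoc, hidr]
  have e2 : hp (hp a b o) o c = hp a b c := by rw [hassoc, hidl]
  rw [e1, e2]

theorem act_hp3 {K : Type u} [CommRing K] {A : Type v} [AffMod K A] (α : K) (o : A)
    (p1 p2 p3 q1 q2 q3 : A) :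
    hp (act α p1 q1) (act α p2 q2) (act α p3 q3)
      = act (A := A) α (hp p1 p2 p3) (hp q1 q2 q3) := by
  rw [act_base α p1 q1 o, act_base α p2 q2 o, act_base α p3 q3 o,
    act_base α (hp p1 p2 p3) (hp q1 q2 q3) o, act_hp, act_hp]
  letI := heapGroup o
  simp only [heap_hp_eq o]
  abel

theorem hp_medial {A : Type v} [AbHeap A] (o a1 a2 a3 b1 b2 b3 c1 c2 c3 : A) :
    hp (hp a1 a2 a3) (hp b1 b2 b3) (hp c1 c2 c3)
      = hp (hp a1 b1 c1) (hp a2 b2 c2) (hp a3 b3 c3) := by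
  letI := heapGroup o
  simp only [heap_hp_eq o]
  abel

section GroupLemmas
variable {A : Type v} [AddCommGroup A] (br : A → A → A) (N : A → A)

theorem gAnti
    (hNa : ∀ x y z : A, N (x - y + z) = N x - N y + N z)
    (hanti : ∀ a b : A, br a b - br a a + br b a = br b b) :
    ∀ a b : A,
      (br (N a) b - N (br a b) + br a (N b)) - (br (N a) a - N (br a a) + br a (N a)) +
        (br (N b) a - N (br b a) + br b (N a)) =
      br (N b) b - N (br b b) + br b (N b) := by
  intro a b
  have Nanti : ∀ a b : A, N (br a b) - N (br a a) + N (br b a) = N (br b b) := fun a b => by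
    rw [← hNa, hanti]
  have t1 : br b (N a) = br b b - br (N a) b + br (N a) (N a) := by
    rw [← hanti (N a) b]; abel
  have t2 : br (N b) a = br (N b) (N b) - br a (N b) + br a a := by
    rw [← hanti a (N b)]; abel
  have t3 : br a (N a) = br a a - br (N a) a + br (N a) (N a) := by
    rw [← hanti (N a) a]; abel
  have t4 : br b (N b) = br b b - br (N b) b + br (N b) (N b) := by
    rw [← hanti (N b) b]; abel
  have t5 : N (br b a) = N (br b b) - N (br a b) + N (br a a) := by
    rw [← Nanti a b]; abel
  rw [t1, t2, t3, t4, t5]; abel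
theorem gJac
    (h2 : ∀ x y1 y2 y3 : A, br x (y1 - y2 + y3) = br x y1 - br x y2 + br x y3)
    (hNa : ∀ x y z : A, N (x - y + z) = N x - N y + N z)
    (hanti : ∀ a b : A, br a b - br a a + br b a = br b b)
    (hjac : ∀ a b c : A,
      br a (br b c) - br a a + br b (br c a) - br b b + br c (br a b) = br c c)
    (hnij : ∀ a b : A, br (N a) (N b) = N (br (N a) b - N (br a b) + br a (N b))) :
    ∀ a b c : A,
      (br (N a) (br (N b) c - N (br b c) + br b (N c)) -
          N (br a (br (N b) c - N (br b c) + br b (N c))) +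
          br a (N (br (N b) c - N (br b c) + br b (N c)))) -
        (br (N a) a - N (br a a) + br a (N a)) +
        (br (N b) (br (N c) a - N (br c a) + br c (N a)) -
          N (br b (br (N c) a - N (br c a) + br c (N a))) +
          br b (N (br (N c) a - N (br c a) + br c (N a)))) -
        (br (N b) b - N (br b b) + br b (N b)) +
        (br (N c) (br (N a) b - N (br a b) + br a (N b)) -
          N (br c (br (N a) b - N (br a b) + br a (N b))) +
          br c (N (br (N a) b - N (br a b) + br a (N b)))) =
      br (N c) c - N (br c c) + br c (N c) := by
  intro a b c
  have Nanti : ∀ x y : A, N (br x y) - N (br x x) + N (br y x) = N (br y y) := fun x y => by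
    rw [← hNa, hanti]
  have Njac : ∀ x y z : A,
      N (br x (br y z)) - N (br x x) + N (br y (br z x)) - N (br y y) + N (br z (br x y)) =
        N (br z z) := fun x y z => by
    rw [← hNa, ← hNa, hjac]
  have NNjac : ∀ x y z : A,
      N (N (br x (br y z))) - N (N (br x x)) + N (N (br y (br z x))) - N (N (br y y)) +
          N (N (br z (br x y))) = N (N (br z z)) := fun x y z => by
    rw [← hNa, ← hNa, ← hNa, ← hNa, hjac]
  have e1 : br c (br (N a) (N b)) =
      br c c - br (N a) (br (N b) c) + br (N a) (N a) - br (N b) (br c (N a)) + br (N b) (N b) := by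
    rw [← hjac (N a) (N b) c]; abel
  have e2 : br (N c) (br (N a) b) =
      br (N c) (N c) - br (N a) (br b (N c)) + br (N a) (N a) - br b (br (N c) (N a)) + br b b := by
    rw [← hjac (N a) b (N c)]; abel
  have e3 : br (N c) (br a (N b)) =
      br (N c) (N c) - br a (br (N b) (N c)) + br a a - br (N b) (br (N c) a) + br (N b) (N b) := by
    rw [← hjac a (N b) (N c)]; abel
  have f1 : N (br c (br (N a) b)) =
      N (br c c) - N (br (N a) (br b c)) + N (br (N a) (N a)) - N (br b (br c (N a))) +
        N (br b b) := by
    rw [← Njac (N a) b c]; abel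
  have f2 : N (br c (br a (N b))) =
      N (br c c) - N (br a (br (N b) c)) + N (br a a) - N (br (N b) (br c a)) +
        N (br (N b) (N b)) := by
    rw [← Njac a (N b) c]; abel
  have f3 : N (br (N c) (br a b)) =
      N (br (N c) (N c)) - N (br a (br b (N c))) + N (br a a) - N (br b (br (N c) a)) +
        N (br b b) := by
    rw [← Njac a b (N c)]; abel
  have g1 : N (N (br c (br a b))) =
      N (N (br c c)) - N (N (br a (br b c))) + N (N (br a a)) - N (N (br b (br c a))) +
        N (N (br b b)) := by
    rw [← NNjac a b c]; abel
  have sa : br a (N a) = br a a - br (N a) a + br (N a) (N a) := by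
    rw [← hanti (N a) a]; abel
  have sb : br b (N b) = br b b - br (N b) b + br (N b) (N b) := by
    rw [← hanti (N b) b]; abel
  have sc : br c (N c) = br c c - br (N c) c + br (N c) (N c) := by
    rw [← hanti (N c) c]; abel
  have qa : N (N (br a a)) = N (br (N a) a) - br (N a) (N a) + N (br a (N a)) := by
    have h := hnij a a; rw [hNa] at h; rw [h]; abel
  have qb : N (N (br b b)) = N (br (N b) b) - br (N b) (N b) + N (br b (N b)) := by
    have h := hnij b b; rw [hNa] at h; rw [h]; abel
  have qc : N (N (br c c)) = N (br (N c) c) - br (N c) (N c) + N (br c (N c)) := by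
    have h := hnij c c; rw [hNa] at h; rw [h]; abel
  have ra : N (br a (N a)) = N (br a a) - N (br (N a) a) + N (br (N a) (N a)) := by
    rw [← Nanti (N a) a]; abel
  have rb : N (br b (N b)) = N (br b b) - N (br (N b) b) + N (br (N b) (N b)) := by
    rw [← Nanti (N b) b]; abel
  have rc : N (br c (N c)) = N (br c c) - N (br (N c) c) + N (br (N c) (N c)) := by
    rw [← Nanti (N c) c]; abel
  rw [← hnij b c, ← hnij c a, ← hnij a b]
  simp only [h2]
  rw [hnij a (br b c), hnij b (br c a), hnij c (br a b)]
  simp only [hNa]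
  rw [e1, e2, e3, f1, f2, f3, g1, sa, sb, sc, qa, qb, qc, ra, rb, rc]
  abel
end GroupLemmas

/-- The Nijenhuis bracket of a Nijenhuis operator on a Lie affgebra is again a
Lie bracket. -/
theorem stmt19 {K : Type u} [CommRing K] {A : Type v} [AffMod K A]
    (br : A → A → A) (hbr : IsLieBracket K br)
    (N : A → A) (hN : IsAffHom K N)
    (hNij : ∀ a b : A, br (N a) (N b) = N (nijBr br N a b)) :
    IsLieBracket K (nijBr br N) := by
  obtain ⟨hbr1, hbr2, hbranti, hbrjac⟩ := hbr
  obtain ⟨hNh, hNact⟩ := hN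
  have br1h : ∀ y x1 x2 x3 : A, br (hp x1 x2 x3) y = hp (br x1 y) (br x2 y) (br x3 y) :=
    fun y x1 x2 x3 => (hbr1 y).1 x1 x2 x3
  have br1a : ∀ (α : K) (y x1 x2 : A), br (act α x1 x2) y = act α (br x1 y) (br x2 y) :=
    fun α y x1 x2 => (hbr1 y).2 α x1 x2
  have br2h : ∀ x y1 y2 y3 : A, br x (hp y1 y2 y3) = hp (br x y1) (br x y2) (br x y3) :=
    fun x y1 y2 y3 => (hbr2 x).1 y1 y2 y3
  have br2a : ∀ (α : K) (x y1 y2 : A), br x (act α y1 y2) = act α (br x y1) (br x y2) :=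
    fun α x y1 y2 => (hbr2 x).2 α y1 y2
  refine ⟨?_, ?_, ?_, ?_⟩
  · intro b
    constructor
    · intro x y z
      simp only [nijBr, hNh, br1h]
      exact hp_medial b _ _ _ _ _ _ _ _ _
    · intro α x y
      simp only [nijBr, hNact, br1a]
      exact act_hp3 α b _ _ _ _ _ _
  · intro a
    constructor
    · intro x y z
      simp only [nijBr, hNh, br2h]
      exact hp_medial a _ _ _ _ _ _ _ _ _
    · intro α x y
      simp only [nijBr, hNact, br2a]
      exact act_hp3 α a _ _ _ _ _ _
  · intro a b
    letI := heapGroup a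
    have hNa' : ∀ x y z : A, N (x - y + z) = N x - N y + N z := fun x y z => by
      have h := hNh x y z; rwa [heap_hp_eq a, heap_hp_eq a] at h
    have hanti' : ∀ x y : A, br x y - br x x + br y x = br y y := fun x y => by
      have h := hbranti x y; rwa [heap_hp_eq a] at h
    simp only [nijBr, heap_hp_eq a]
    exact gAnti br N hNa' hanti' a b
  · intro a b c
    letI := heapGroup a
    have h2' : ∀ x y1 y2 y3 : A, br x (y1 - y2 + y3) = br x y1 - br x y2 + br x y3 :=
      fun x y1 y2 y3 => by
        have h := br2h x y1 y2 y3; rwa [heap_hp_eq a, heap_hp_eq a] at h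
    have hNa' : ∀ x y z : A, N (x - y + z) = N x - N y + N z := fun x y z => by
      have h := hNh x y z; rwa [heap_hp_eq a, heap_hp_eq a] at h
    have hanti' : ∀ x y : A, br x y - br x x + br y x = br y y := fun x y => by
      have h := hbranti x y; rwa [heap_hp_eq a] at h
    have hjac' : ∀ x y z : A,
        br x (br y z) - br x x + br y (br z x) - br y y + br z (br x y) = br z z :=
      fun x y z => by
        have h := hbrjac x y z; rwa [heap_hp_eq a, heap_hp_eq a] at h
    have hnij' : ∀ x y : A, br (N x) (N y) = N (br (N x) y - N (br x y) + br x (N y)) :=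
      fun x y => by
        have h := hNij x y; simp only [nijBr] at h; rwa [heap_hp_eq a] at h
    simp only [nijBr, heap_hp_eq a]
    exact gJac br N h2' hNa' hanti' hjac' hnij' a b c
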